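/- arXiv:1711.01982 — 6 statements merged into one kernel-verified Lean document; each statement's English description precedes it below -/
import Mathlib

section
/- For matrices A ∈ C^{M×N1} with full column rank, B ∈ C^{M×N2}, and a Hermitian matrix R ∈ C^{M×M}, the trace identity tr(P_{[A,B]}^⊥ R) = tr(P_A^⊥ R) - tr(P_{P_A^⊥ B} R) holds, where [A,B] denotes the horizontal concatenation (assumed to have full column rank), with the convention that tr(P_{P_A^⊥ B} R) = 0 if P_A^⊥ B = 0. -/
open Matrix ComplexOrder

/-!
The Gram matrix of `[A, B]` is `[[AᴴA, AᴴB], [BᴴA, BᴴB]]`, and since `P_A^⊥` is a Hermitian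
idempotent its Schur complement `BᴴB - BᴴA (AᴴA)⁻¹ AᴴB` equals `EᴴE` for `E = P_A^⊥ B`. Full column
rank of `[A, B]` makes both `A` and `E` injective, so the blockwise inverse exists, and multiplying
it out gives `P_[A,B] = P_A + P_E`; taking traces against `R` gives the identity. The convention
for `E = 0` agrees with `projCol 0 = 0`.
-/

/-- Orthogonal projector onto the column space of `C` (formula `C (Cᴴ C)⁻¹ Cᴴ`). -/
noncomputable def projCol {M N : ℕ} (C : Matrix (Fin M) (Fin N) ℂ) :
    Matrix (Fin M) (Fin M) ℂ :=
  C * (Cᴴ * C)⁻¹ * Cᴴ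

namespace Matrix

theorem mulVec_injective_of_rank_eq_card {m n R : Type*} [Fintype n] [Field R]
    {X : Matrix m n R} (h : X.rank = Fintype.card n) : Function.Injective X.mulVec := by
  rw [mulVec_injective_iff, linearIndependent_iff_card_eq_finrank_span, ← h,
    rank_eq_finrank_span_cols]
  rfl

section StarOrderedField

variable {m n R : Type*} [Fintype m] [Fintype n] [DecidableEq n]
  [Field R] [PartialOrder R] [StarRing R] [StarOrderedRing R]

theorem isUnit_det_conjTranspose_mul_self {X : Matrix m n R}
    (hX : Function.Injective X.mulVec) : IsUnit (Xᴴ * X).det := by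
  rw [← isUnit_iff_isUnit_det, ← mulVec_injective_iff_isUnit, ← coe_mulVecLin,
    ← LinearMap.ker_eq_bot, ker_mulVecLin_conjTranspose_mul_self, LinearMap.ker_eq_bot]
  exact hX

end StarOrderedField

theorem mulVec_injective_of_fromCols {m n₁ n₂ R : Type*} [Fintype n₁] [Fintype n₂]
    [Semiring R]
    {A : Matrix m n₁ R} {B : Matrix m n₂ R} (h : Function.Injective (fromCols A B).mulVec) :
    Function.Injective A.mulVec := fun v w hvw =>
  (Sum.elim_eq_iff.1 (@h (Sum.elim v 0) (Sum.elim w 0) (by simp [hvw]))).1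

end Matrix

section projCol

variable {M N N' : ℕ}

theorem projCol_conjTranspose (A : Matrix (Fin M) (Fin N) ℂ) : (projCol A)ᴴ = projCol A := by
  simp [projCol, conjTranspose_nonsing_inv, Matrix.mul_assoc]

theorem projCol_zero : projCol (0 : Matrix (Fin M) (Fin N) ℂ) = 0 := by
  simp [projCol]

variable {A : Matrix (Fin M) (Fin N) ℂ}

theorem projCol_mul_self_of_injective (hA : Function.Injective A.mulVec) :
    projCol A * A = A := by
  rw [projCol, Matrix.mul_assoc, Matrix.mul_assoc,
    nonsing_inv_mul _ (isUnit_det_conjTranspose_mul_self hA), Matrix.mul_one]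

theorem projCol_mul_projCol_of_injective (hA : Function.Injective A.mulVec) :
    projCol A * projCol A = projCol A :=
  calc projCol A * projCol A = projCol A * A * (Aᴴ * A)⁻¹ * Aᴴ := by
        simp only [projCol, Matrix.mul_assoc]
    _ = projCol A := by rw [projCol_mul_self_of_injective hA, projCol]

theorem conjTranspose_one_sub_projCol_mul_one_sub_projCol (hA : Function.Injective A.mulVec) :
    (1 - projCol A)ᴴ * (1 - projCol A) = 1 - projCol A := by
  rw [conjTranspose_sub, conjTranspose_one, projCol_conjTranspose]
  noncomm_ring
  rw [projCol_mul_projCol_of_injective hA]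
  abel

theorem conjTranspose_mul_self_one_sub_projCol_mul (hA : Function.Injective A.mulVec)
    (B : Matrix (Fin M) (Fin N') ℂ) :
    ((1 - projCol A) * B)ᴴ * ((1 - projCol A) * B) =
      Bᴴ * B - Bᴴ * A * (Aᴴ * A)⁻¹ * (Aᴴ * B) := by
  rw [conjTranspose_mul, Matrix.mul_assoc, ← Matrix.mul_assoc _ _ B,
    conjTranspose_one_sub_projCol_mul_one_sub_projCol hA]
  simp only [projCol, Matrix.sub_mul, Matrix.mul_sub, Matrix.one_mul, Matrix.mul_assoc]

theorem mulVec_injective_one_sub_projCol_mul {B : Matrix (Fin M) (Fin N') ℂ}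
    (h : Function.Injective (fromCols A B).mulVec) :
    Function.Injective ((1 - projCol A) * B).mulVec := by
  rw [← coe_mulVecLin, injective_iff_map_eq_zero]
  intro x hx
  have hBx : B *ᵥ x = A *ᵥ (((Aᴴ * A)⁻¹ * Aᴴ * B) *ᵥ x) := by
    rw [coe_mulVecLin, Matrix.sub_mul, Matrix.one_mul, sub_mulVec, sub_eq_zero] at hx
    rw [hx, projCol, mulVec_mulVec]
    simp only [Matrix.mul_assoc]
  have : fromCols A B *ᵥ Sum.elim (-(((Aᴴ * A)⁻¹ * Aᴴ * B) *ᵥ x)) x = fromCols A B *ᵥ 0 := by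
    rw [fromCols_mulVec_sumElim, hBx, mulVec_neg, mulVec_zero, neg_add_cancel]
  exact (Sum.elim_eq_iff.1 ((h this).trans Sum.elim_zero_zero.symm)).2

theorem fromCols_mul_inv_mul_conjTranspose_eq_projCol_add {B : Matrix (Fin M) (Fin N') ℂ}
    (h : Function.Injective (fromCols A B).mulVec) :
    fromCols A B * ((fromCols A B)ᴴ * fromCols A B)⁻¹ * (fromCols A B)ᴴ =
      projCol A + projCol ((1 - projCol A) * B) := by
  have hA := mulVec_injective_of_fromCols h
  set E := (1 - projCol A) * B
  have hEE : Bᴴ * B - Bᴴ * A * (Aᴴ * A)⁻¹ * (Aᴴ * B) = Eᴴ * E :=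
    (conjTranspose_mul_self_one_sub_projCol_mul hA B).symm
  let := invertibleOfIsUnitDet _ (isUnit_det_conjTranspose_mul_self hA)
  let : Invertible (Bᴴ * B - Bᴴ * A * ⅟(Aᴴ * A) * (Aᴴ * B)) := by
    rw [invOf_eq_nonsing_inv, hEE]
    exact invertibleOfIsUnitDet _
      (isUnit_det_conjTranspose_mul_self (mulVec_injective_one_sub_projCol_mul h))
  let := fromBlocks₁₁Invertible (Aᴴ * A) (Aᴴ * B) (Bᴴ * A) (Bᴴ * B)
  have hgram : (fromCols A B)ᴴ * fromCols A B =
      fromBlocks (Aᴴ * A) (Aᴴ * B) (Bᴴ * A) (Bᴴ * B) := by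
    rw [conjTranspose_fromCols_eq_fromRows_conjTranspose, fromRows_mul_fromCols]
  rw [hgram, ← invOf_eq_nonsing_inv, invOf_fromBlocks₁₁_eq]
  simp only [invOf_eq_nonsing_inv]
  rw [hEE, conjTranspose_fromCols_eq_fromRows_conjTranspose,
    fromCols_mul_fromBlocks, fromCols_mul_fromRows]
  change _ = projCol A + E * (Eᴴ * E)⁻¹ * Eᴴ
  generalize (Eᴴ * E)⁻¹ = S
  simp only [E, conjTranspose_mul, conjTranspose_sub, conjTranspose_one, projCol_conjTranspose]
  simp only [projCol, Matrix.mul_add, Matrix.add_mul, Matrix.mul_sub, Matrix.sub_mul,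
    Matrix.mul_neg, Matrix.neg_mul, Matrix.one_mul, Matrix.mul_one, Matrix.mul_assoc]
  abel

end projCol

theorem stmt3_general {M N1 N2 : ℕ} (A : Matrix (Fin M) (Fin N1) ℂ)
    (B : Matrix (Fin M) (Fin N2) ℂ)
    (hAB : (Matrix.fromCols A B).rank = N1 + N2)
    (R : Matrix (Fin M) (Fin M) ℂ) :
    (((1 - (Matrix.fromCols A B) *
        (((Matrix.fromCols A B)ᴴ * (Matrix.fromCols A B))⁻¹) *
        (Matrix.fromCols A B)ᴴ) * R).trace) =
      ((1 - projCol A) * R).trace -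
        (if (1 - projCol A) * B = 0 then 0
         else (projCol ((1 - projCol A) * B) * R).trace) := by
  have hinj : Function.Injective (fromCols A B).mulVec :=
    mulVec_injective_of_rank_eq_card (by simpa using hAB)
  have hE : (if (1 - projCol A) * B = 0 then 0 else (projCol ((1 - projCol A) * B) * R).trace) =
      (projCol ((1 - projCol A) * B) * R).trace := by
    split_ifs with h
    · rw [h, projCol_zero, Matrix.zero_mul, trace_zero]
    · rfl
  rw [fromCols_mul_inv_mul_conjTranspose_eq_projCol_add hinj, hE, sub_add_eq_sub_sub,
    Matrix.sub_mul, trace_sub]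

theorem stmt3 {M N1 N2 : ℕ} (A : Matrix (Fin M) (Fin N1) ℂ)
    (B : Matrix (Fin M) (Fin N2) ℂ) (hA : A.rank = N1)
    (hAB : (Matrix.fromCols A B).rank = N1 + N2)
    (R : Matrix (Fin M) (Fin M) ℂ) (hR : R.IsHermitian) :
    (((1 - (Matrix.fromCols A B) *
        (((Matrix.fromCols A B)ᴴ * (Matrix.fromCols A B))⁻¹) *
        (Matrix.fromCols A B)ᴴ) * R).trace) =
      ((1 - projCol A) * R).trace -
        (if (1 - projCol A) * B = 0 then 0
         else (projCol ((1 - projCol A) * B) * R).trace) :=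
  stmt3_general A B hAB R
end

section
/- Let D = diag(d_1,...,d_K) be a real diagonal matrix with distinct entries, ρ > 0, and z ∈ C^K with all entries nonzero. Then x ∈ R is an eigenvalue of D - ρ z z^H if and only if x is not equal to any d_k and p(x) = 1 - ρ Σ_{k=1}^K |z_k|²/(d_k - x) = 0. -/
open Matrix ComplexOrder

/-!
An eigenvector `v` of `diagonal d - vecMulVec u w` for `μ` satisfies
`(d i - μ) * v i = (w ⬝ᵥ v) * u i`. If `w ⬝ᵥ v` vanished, `v` would be supported on the single
index with `d j = μ` (injectivity of `d`), and then `w ⬝ᵥ v = w j * v j ≠ 0`. So `w ⬝ᵥ v ≠ 0`,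
which with `u i ≠ 0` excludes `μ = d i`; solving for `v i` and pairing with `w` gives
`w ⬝ᵥ v = (w ⬝ᵥ v) * ∑ w k * u k / (d k - μ)`, the secular equation. Conversely
`v i = u i / (d i - μ)` is an eigenvector. The Hermitian case takes `u = ρ • z` and `w = star z`.
-/

namespace Matrix

variable {𝕜 n : Type*} [Field 𝕜] [Fintype n]

theorem mem_spectrum_iff_exists_mulVec_eq_smul [DecidableEq n] (A : Matrix n n 𝕜) (μ : 𝕜) :
    μ ∈ spectrum 𝕜 A ↔ ∃ v ≠ 0, A *ᵥ v = μ • v := by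
  rw [spectrum.mem_iff, Algebra.algebraMap_eq_smul_one, isUnit_iff_isUnit_det, isUnit_iff_ne_zero,
    not_not, ← exists_mulVec_eq_zero_iff]
  simp only [sub_mulVec, smul_mulVec, one_mulVec, sub_eq_zero, eq_comm]

theorem diagonal_sub_vecMulVec_mulVec_eq_smul_iff [DecidableEq n] (d u w v : n → 𝕜) (μ : 𝕜) :
    (diagonal d - vecMulVec u w) *ᵥ v = μ • v ↔ ∀ i, (d i - μ) * v i = (w ⬝ᵥ v) * u i := by
  simp only [funext_iff, sub_mulVec, vecMulVec_mulVec, op_smul_eq_smul, Pi.sub_apply,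
    mulVec_diagonal, Pi.smul_apply, smul_eq_mul]
  refine forall_congr' fun i => ⟨fun h => ?_, fun h => ?_⟩ <;> linear_combination h

section Secular

variable {d u w v : n → 𝕜} {μ : 𝕜}

theorem dotProduct_ne_zero_of_eigenvector (hd : Function.Injective d) (hw : ∀ k, w k ≠ 0)
    (hv : v ≠ 0) (heig : ∀ i, (d i - μ) * v i = (w ⬝ᵥ v) * u i) : w ⬝ᵥ v ≠ 0 := by
  intro hc
  simp only [hc, zero_mul, mul_eq_zero, sub_eq_zero] at heig
  obtain ⟨j, hj⟩ := Function.ne_iff.mp hv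
  have hμ : d j = μ := (heig j).resolve_right hj
  have hsupp : ∀ i ≠ j, v i = 0 := fun i hij =>
    (heig i).resolve_left fun hi => hij (hd (hi.trans hμ.symm))
  rw [dotProduct, Finset.sum_eq_single j (fun i _ hij => by rw [hsupp i hij, mul_zero])
    (by simp)] at hc
  exact mul_ne_zero (hw j) hj hc

theorem eigenvalue_ne_of_eigenvector (hu : ∀ k, u k ≠ 0) (hc : w ⬝ᵥ v ≠ 0)
    (heig : ∀ i, (d i - μ) * v i = (w ⬝ᵥ v) * u i) (k : n) : μ ≠ d k := by
  rintro rfl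
  simpa [hc, hu k] using (heig k).symm

theorem secular_eq_zero_of_eigenvector (hμ : ∀ k, μ ≠ d k) (hc : w ⬝ᵥ v ≠ 0)
    (heig : ∀ i, (d i - μ) * v i = (w ⬝ᵥ v) * u i) :
    1 - ∑ k, w k * u k / (d k - μ) = 0 := by
  have hdμ : ∀ k, d k - μ ≠ 0 := fun k => sub_ne_zero.mpr (hμ k).symm
  have hv : ∀ k, v k = (w ⬝ᵥ v) * u k / (d k - μ) := fun k => by
    rw [eq_div_iff (hdμ k), mul_comm, heig k]
  have hself : w ⬝ᵥ v = (w ⬝ᵥ v) * ∑ k, w k * u k / (d k - μ) := by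
    conv_lhs => rw [dotProduct]
    rw [Finset.mul_sum]
    refine Finset.sum_congr rfl fun k _ => ?_
    rw [hv k]
    ring
  rw [← mul_left_cancel₀ hc (hself.symm.trans (mul_one _).symm), sub_self]

theorem exists_eigenvector_of_secular_eq_zero (hμ : ∀ k, μ ≠ d k)
    (hsec : 1 - ∑ k, w k * u k / (d k - μ) = 0) :
    ∃ v ≠ 0, ∀ i, (d i - μ) * v i = (w ⬝ᵥ v) * u i := by
  have hdμ : ∀ k, d k - μ ≠ 0 := fun k => sub_ne_zero.mpr (hμ k).symm
  set v : n → 𝕜 := fun k => u k / (d k - μ)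
  have hc : w ⬝ᵥ v = 1 := by
    simp only [dotProduct, v, ← mul_div_assoc]
    linear_combination -hsec
  refine ⟨v, fun hv => ?_, fun i => ?_⟩
  · simp [hv] at hc
  · rw [hc, one_mul, mul_div_cancel₀ _ (hdμ i)]

end Secular

theorem mem_spectrum_diagonal_sub_vecMulVec_iff [DecidableEq n] {d u w : n → 𝕜}
    (hd : Function.Injective d) (hu : ∀ k, u k ≠ 0) (hw : ∀ k, w k ≠ 0) (μ : 𝕜) :
    μ ∈ spectrum 𝕜 (diagonal d - vecMulVec u w) ↔
      (∀ k, μ ≠ d k) ∧ 1 - ∑ k, w k * u k / (d k - μ) = 0 := by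
  simp only [mem_spectrum_iff_exists_mulVec_eq_smul, diagonal_sub_vecMulVec_mulVec_eq_smul_iff]
  constructor
  · rintro ⟨v, hv, heig⟩
    have hc := dotProduct_ne_zero_of_eigenvector hd hw hv heig
    have hμ := eigenvalue_ne_of_eigenvector hu hc heig
    exact ⟨hμ, secular_eq_zero_of_eigenvector hμ hc heig⟩
  · rintro ⟨hμ, hsec⟩
    exact exists_eigenvector_of_secular_eq_zero hμ hsec

end Matrix

theorem stmt6 {K : ℕ} (d : Fin K → ℝ) (hd : Function.Injective d) (ρ : ℝ) (hρ : 0 < ρ)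
    (z : Fin K → ℂ) (hz : ∀ k, z k ≠ 0) (x : ℝ) :
    (x : ℂ) ∈ spectrum ℂ
        (Matrix.diagonal (fun i => (d i : ℂ)) - (ρ : ℂ) • Matrix.vecMulVec z (star z)) ↔
      (∀ k, x ≠ d k) ∧ 1 - ρ * ∑ k, ‖z k‖ ^ 2 / (d k - x) = 0 := by
  have hρz : ∀ k, ((ρ : ℂ) • z) k ≠ 0 := fun k =>
    smul_ne_zero (Complex.ofReal_ne_zero.mpr hρ.ne') (hz k)
  have hsec : ∑ k, star z k * ((ρ : ℂ) • z) k / (d k - x) =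
      ((ρ * ∑ k, ‖z k‖ ^ 2 / (d k - x) : ℝ) : ℂ) := by
    push_cast
    rw [Finset.mul_sum]
    refine Finset.sum_congr rfl fun k _ => ?_
    rw [Pi.smul_apply, smul_eq_mul, Pi.star_apply, Complex.star_def, ← Complex.conj_mul']
    ring
  have hdC : Function.Injective fun i => (d i : ℂ) := Complex.ofReal_injective.comp hd
  have hz' : ∀ k, star z k ≠ 0 := fun k => star_ne_zero.mpr (hz k)
  rw [← smul_vecMulVec, mem_spectrum_diagonal_sub_vecMulVec_iff hdC hρz hz', hsec]
  norm_cast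
end

section
/- Let D = diag(d_1,...,d_K) be real diagonal with distinct entries, ρ > 0, z ∈ C^K with all entries nonzero, and let d̄ be an eigenvalue of D - ρ z z^H. Then the vector u = (D - d̄ I_K)^{-1} z is an eigenvector of D - ρ z z^H associated with d̄. -/
/-! An eigenvector `v` of `diagonal d - vecMulVec z w` for `μ` satisfies
`(d i - μ) * v i = (w ⬝ᵥ v) * z i`. Since `z` and `w` have no zero entries and `d` is injective,
`μ` is none of the `d i`, so `v = (w ⬝ᵥ v) • (diagonal d - μ • 1)⁻¹ *ᵥ z`, and the scalar is
nonzero because `v` is. The Hermitian perturbation `ρ • vecMulVec z (star z)` is the case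
`w = ρ • star z`. -/

open Matrix ComplexOrder

namespace Matrix

variable {𝕜 n : Type*} [Field 𝕜] [Fintype n] [DecidableEq n]

theorem exists_mulVec_eq_smul_of_mem_spectrum {A : Matrix n n 𝕜} {μ : 𝕜}
    (hμ : μ ∈ spectrum 𝕜 A) : ∃ v ≠ 0, A *ᵥ v = μ • v := by
  rw [← spectrum_toLin', ← Module.End.hasEigenvalue_iff_mem_spectrum] at hμ
  obtain ⟨v, hv⟩ := hμ.exists_hasEigenvector
  exact ⟨v, hv.2, Module.End.mem_eigenspace_iff.1 hv.1⟩

theorem diagonal_sub_smul_one_inv_mulVec {d : n → 𝕜} {μ : 𝕜} (hμ : ∀ i, d i ≠ μ) (z : n → 𝕜) :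
    (diagonal d - μ • 1)⁻¹ *ᵥ z = fun i => z i / (d i - μ) := by
  have hinv : (diagonal d - μ • 1)⁻¹ = diagonal fun i => (d i - μ)⁻¹ := by
    refine inv_eq_left_inv ?_
    rw [smul_one_eq_diagonal, diagonal_sub, diagonal_mul_diagonal]
    simp [sub_ne_zero.2 (hμ _)]
  ext i
  rw [hinv, mulVec_diagonal, div_eq_inv_mul]

section RankOnePerturbation

variable {d z w v : n → 𝕜} {μ : 𝕜}

theorem sub_mul_eq_dotProduct_mul_of_mulVec_eq_smul
    (hv : (diagonal d - vecMulVec z w) *ᵥ v = μ • v) (i : n) :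
    (d i - μ) * v i = (w ⬝ᵥ v) * z i := by
  have := congrFun hv i
  simp only [sub_mulVec, vecMulVec_mulVec, Pi.sub_apply, mulVec_diagonal, Pi.smul_apply,
    smul_eq_mul, MulOpposite.smul_eq_mul_unop, MulOpposite.unop_op] at this
  linear_combination this

/-- If `μ = d k`, row `k` forces `w ⬝ᵥ v = 0`; then injectivity of `d` confines `v` to the
coordinate `k`, where `w k ≠ 0` kills it. -/
theorem ne_of_mulVec_eq_smul (hd : Function.Injective d) (hz : ∀ k, z k ≠ 0)
    (hw : ∀ k, w k ≠ 0) (hv0 : v ≠ 0) (hv : (diagonal d - vecMulVec z w) *ᵥ v = μ • v) (k : n) :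
    d k ≠ μ := by
  rintro rfl
  have row := sub_mul_eq_dotProduct_mul_of_mulVec_eq_smul hv
  have hwv : w ⬝ᵥ v = 0 := by
    simpa [hz k] using (row k).symm
  have hsingle : v = Pi.single k (v k) := by
    ext i
    rcases eq_or_ne i k with rfl | hik
    · simp
    · have : (d i - d k) * v i = 0 := by rw [row i, hwv, zero_mul]
      simpa [hik, sub_ne_zero.2 (hd.ne hik)] using this
  rw [hsingle, dotProduct_single, mul_eq_zero, or_iff_right (hw k)] at hwv
  exact hv0 (hsingle.trans (by rw [hwv, Pi.single_zero]))

theorem eq_smul_diagonal_sub_smul_one_inv_mulVec (hμ : ∀ i, d i ≠ μ)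
    (hv : (diagonal d - vecMulVec z w) *ᵥ v = μ • v) :
    v = (w ⬝ᵥ v) • ((diagonal d - μ • 1)⁻¹ *ᵥ z) := by
  ext i
  rw [diagonal_sub_smul_one_inv_mulVec hμ, Pi.smul_apply, smul_eq_mul, mul_div_assoc',
    eq_div_iff (sub_ne_zero.2 (hμ i)), mul_comm, sub_mul_eq_dotProduct_mul_of_mulVec_eq_smul hv]

theorem inv_mulVec_isEigenvector_of_mem_spectrum (hd : Function.Injective d)
    (hz : ∀ k, z k ≠ 0) (hw : ∀ k, w k ≠ 0) (hμ : μ ∈ spectrum 𝕜 (diagonal d - vecMulVec z w)) :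
    (diagonal d - μ • 1)⁻¹ *ᵥ z ≠ 0 ∧
      (diagonal d - vecMulVec z w) *ᵥ ((diagonal d - μ • 1)⁻¹ *ᵥ z) =
        μ • ((diagonal d - μ • 1)⁻¹ *ᵥ z) := by
  obtain ⟨v, hv0, hv⟩ := exists_mulVec_eq_smul_of_mem_spectrum hμ
  have hv_eq := eq_smul_diagonal_sub_smul_one_inv_mulVec (ne_of_mulVec_eq_smul hd hz hw hv0 hv) hv
  set u := (diagonal d - μ • 1)⁻¹ *ᵥ z
  have hc : w ⬝ᵥ v ≠ 0 := fun h => hv0 (by rw [hv_eq, h, zero_smul])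
  refine ⟨fun hu => hv0 (by rw [hv_eq, hu, smul_zero]), ?_⟩
  rw [eq_inv_smul_iff₀ hc |>.2 hv_eq.symm, mulVec_smul, hv, smul_comm]

end RankOnePerturbation

end Matrix

theorem stmt7 {K : ℕ} (d : Fin K → ℝ) (hd : Function.Injective d) (ρ : ℝ) (hρ : 0 < ρ)
    (z : Fin K → ℂ) (hz : ∀ k, z k ≠ 0) (μ : ℝ)
    (hμ : (μ : ℂ) ∈ spectrum ℂ
      (Matrix.diagonal (fun i => (d i : ℂ)) - (ρ : ℂ) • Matrix.vecMulVec z (star z))) :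
    let u : Fin K → ℂ :=
      (Matrix.diagonal (fun i => (d i : ℂ)) - (μ : ℂ) • (1 : Matrix (Fin K) (Fin K) ℂ))⁻¹ *ᵥ z
    u ≠ 0 ∧
      (Matrix.diagonal (fun i => (d i : ℂ)) - (ρ : ℂ) • Matrix.vecMulVec z (star z)) *ᵥ u =
        (μ : ℂ) • u := by
  have hw : ∀ k, ((ρ : ℂ) • star z) k ≠ 0 := fun k =>
    smul_ne_zero (Complex.ofReal_ne_zero.2 hρ.ne') (star_ne_zero.2 (hz k))
  rw [← vecMulVec_smul] at hμ ⊢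
  exact inv_mulVec_isEigenvector_of_mem_spectrum
    (Complex.ofReal_injective.comp hd) hz hw hμ
end

section
/- Let R be an M×M Hermitian positive definite matrix and a ∈ C^M nonzero. Set σ̂² = 1/(a^H R^{-1} a) (the Capon power). Then R - σ̂² a a^H is positive semidefinite and singular, and for any σ² > σ̂², the matrix R - σ² a a^H is not positive semidefinite. -/
/-!
Put `u = R⁻¹ a`, so that `aᴴ u = 1 / t` and `S = R - t a aᴴ` satisfies `S u = 0`; hence
`det S = 0`. Because `S` is Hermitian, moving `x` along `u` leaves `xᴴ S x` unchanged, and the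
shift `y = x - t (aᴴ x) u` has `aᴴ y = 0`, so `xᴴ S x = yᴴ R y ≥ 0`. For `σ > t` the test vector
`u` gives `uᴴ (R - σ a aᴴ) u = 1/t - σ/t² < 0`.
-/

open Matrix ComplexOrder

namespace Matrix

variable {n : Type*} [Fintype n]

lemma dotProduct_sub_smul_vecMulVec_star_mulVec (R : Matrix n n ℂ) (a x : n → ℂ) (c : ℂ) :
    star x ⬝ᵥ ((R - c • vecMulVec a (star a)) *ᵥ x) =
      star x ⬝ᵥ (R *ᵥ x) - c * (star (star a ⬝ᵥ x) * (star a ⬝ᵥ x)) := by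
  rw [sub_mulVec, dotProduct_sub, smul_mulVec, vecMulVec_mulVec, op_smul_eq_smul,
    dotProduct_smul, dotProduct_smul, star_dotProduct x a, smul_eq_mul, smul_eq_mul,
    mul_comm (star a ⬝ᵥ x)]

lemma IsHermitian.sub_real_smul_vecMulVec_star {R : Matrix n n ℂ} (hR : R.IsHermitian)
    (a : n → ℂ) (s : ℝ) : (R - (s : ℂ) • vecMulVec a (star a)).IsHermitian :=
  hR.sub ((posSemidef_vecMulVec_self_star a).isHermitian.smul (Complex.conj_ofReal s))

lemma IsHermitian.dotProduct_mulVec_add_smul_of_mulVec_eq_zero {α : Type*} [CommRing α]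
    [StarRing α] {S : Matrix n n α} (hS : S.IsHermitian) {u : n → α} (hu : S *ᵥ u = 0)
    (x : n → α) (c : α) :
    star (x + c • u) ⬝ᵥ (S *ᵥ (x + c • u)) = star x ⬝ᵥ (S *ᵥ x) := by
  have hu' : star u ⬝ᵥ (S *ᵥ x) = 0 := by
    rw [dotProduct_mulVec, ← hS.eq, ← star_mulVec, hu, star_zero, zero_dotProduct]
  rw [mulVec_add, mulVec_smul, hu, smul_zero, add_zero, star_add, add_dotProduct, star_smul,
    smul_dotProduct, hu', smul_zero, add_zero]

variable [DecidableEq n] {R : Matrix n n ℂ} {a : n → ℂ} {t : ℝ}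

lemma mulVec_inv_mulVec (hR : IsUnit R.det) (a : n → ℂ) : R *ᵥ (R⁻¹ *ᵥ a) = a := by
  rw [mulVec_mulVec, mul_nonsing_inv _ hR, one_mulVec]

lemma sub_smul_vecMulVec_star_mulVec_inv_mulVec (hR : IsUnit R.det) {c : ℂ}
    (hc : c * (star a ⬝ᵥ (R⁻¹ *ᵥ a)) = 1) :
    (R - c • vecMulVec a (star a)) *ᵥ (R⁻¹ *ᵥ a) = 0 := by
  rw [sub_mulVec, mulVec_inv_mulVec hR, smul_mulVec, vecMulVec_mulVec, op_smul_eq_smul,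
    smul_smul, hc, one_smul, sub_self]

lemma det_sub_smul_vecMulVec_star_eq_zero (hR : IsUnit R.det) {c : ℂ}
    (hc : c * (star a ⬝ᵥ (R⁻¹ *ᵥ a)) = 1) :
    (R - c • vecMulVec a (star a)).det = 0 := by
  refine exists_mulVec_eq_zero_iff.mp ⟨R⁻¹ *ᵥ a, fun hu => ?_,
    sub_smul_vecMulVec_star_mulVec_inv_mulVec hR hc⟩
  rw [hu, dotProduct_zero, mul_zero] at hc
  exact zero_ne_one hc

lemma PosDef.posSemidef_sub_real_smul_vecMulVec_star (hR : R.PosDef)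
    (ht : (t : ℂ) * (star a ⬝ᵥ (R⁻¹ *ᵥ a)) = 1) :
    (R - (t : ℂ) • vecMulVec a (star a)).PosSemidef := by
  have hS := hR.isHermitian.sub_real_smul_vecMulVec_star a t
  refine PosSemidef.of_dotProduct_mulVec_nonneg hS fun x => ?_
  set y := x + (-((t : ℂ) * (star a ⬝ᵥ x))) • (R⁻¹ *ᵥ a)
  have hy : star a ⬝ᵥ y = 0 := by
    rw [dotProduct_add, dotProduct_smul, smul_eq_mul]
    linear_combination -(star a ⬝ᵥ x) * ht
  rw [← hS.dotProduct_mulVec_add_smul_of_mulVec_eq_zero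
    (sub_smul_vecMulVec_star_mulVec_inv_mulVec ((isUnit_iff_isUnit_det R).mp hR.isUnit) ht),
    dotProduct_sub_smul_vecMulVec_star_mulVec, hy, mul_zero, mul_zero, sub_zero]
  exact hR.posSemidef.dotProduct_mulVec_nonneg y

lemma not_posSemidef_sub_real_smul_vecMulVec_star (hR : IsUnit R.det)
    (ht : (t : ℂ) * (star a ⬝ᵥ (R⁻¹ *ᵥ a)) = 1) {σ : ℝ} (hσ : t < σ) :
    ¬ (R - (σ : ℂ) • vecMulVec a (star a)).PosSemidef := by
  intro hPSD
  have hq : star a ⬝ᵥ (R⁻¹ *ᵥ a) = ((t⁻¹ : ℝ) : ℂ) := by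
    rw [Complex.ofReal_inv]
    exact eq_inv_of_mul_eq_one_right ht
  have ht0 : t ≠ 0 := by
    rintro rfl
    simp at ht
  have hform := hPSD.dotProduct_mulVec_nonneg (R⁻¹ *ᵥ a)
  rw [dotProduct_sub_smul_vecMulVec_star_mulVec, mulVec_inv_mulVec hR, star_dotProduct, hq,
    Complex.star_def, Complex.conj_ofReal, ← Complex.ofReal_mul, ← Complex.ofReal_mul,
    ← Complex.ofReal_sub, Complex.zero_le_real] at hform
  have hneg : t⁻¹ - σ * (t⁻¹ * t⁻¹) < 0 := by
    have : t⁻¹ - σ * (t⁻¹ * t⁻¹) = (t - σ) * (t⁻¹ * t⁻¹) := by field_simp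
    rw [this]
    exact mul_neg_of_neg_of_pos (by linarith) (mul_self_pos.mpr (inv_ne_zero ht0))
  linarith

end Matrix

theorem stmt8_general {M : ℕ} (R : Matrix (Fin M) (Fin M) ℂ) (hR : R.PosDef)
    (a : Fin M → ℂ) (t : ℝ)
    (ht : (t : ℂ) * (star a ⬝ᵥ (R⁻¹ *ᵥ a)) = 1) :
    (R - (t : ℂ) • Matrix.vecMulVec a (star a)).PosSemidef ∧
      (R - (t : ℂ) • Matrix.vecMulVec a (star a)).det = 0 ∧
      ∀ σ : ℝ, t < σ →
        ¬ (R - (σ : ℂ) • Matrix.vecMulVec a (star a)).PosSemidef := by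
  have hdet : IsUnit R.det := (isUnit_iff_isUnit_det R).mp hR.isUnit
  exact ⟨hR.posSemidef_sub_real_smul_vecMulVec_star ht,
    det_sub_smul_vecMulVec_star_eq_zero hdet ht,
    fun _ hσ => not_posSemidef_sub_real_smul_vecMulVec_star hdet ht hσ⟩

theorem stmt8 {M : ℕ} (R : Matrix (Fin M) (Fin M) ℂ) (hR : R.PosDef)
    (a : Fin M → ℂ) (ha : a ≠ 0) (t : ℝ)
    (ht : (t : ℂ) * (star a ⬝ᵥ (R⁻¹ *ᵥ a)) = 1) :
    (R - (t : ℂ) • Matrix.vecMulVec a (star a)).PosSemidef ∧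
      (R - (t : ℂ) • Matrix.vecMulVec a (star a)).det = 0 ∧
      ∀ σ : ℝ, t < σ →
        ¬ (R - (σ : ℂ) • Matrix.vecMulVec a (star a)).PosSemidef :=
  stmt8_general R hR a t ht
end

section
/- Let R ∈ C^{M×M} be Hermitian and E ∈ C^{M×T} with rank(E) ≤ N-1 < M. Then the minimum over all such E of ‖R - E E^H‖_F² equals Σ_{k=N}^{M} λ_k²(R) + Σ over indices k ≤ N-1 with λ_k(R) < 0 of λ_k²(R); in particular if the (N-1) largest eigenvalues of R are nonnegative, the minimum is Σ_{k=N}^{M} λ_k²(R), attained when E E^H equals the truncated spectral decomposition using the (N-1) largest eigenpairs. -/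
open Matrix ComplexOrder

/-- Descending (k-th largest) eigenvalue of a Hermitian complex matrix. -/
noncomputable def eigDesc {n : ℕ} (A : Matrix (Fin n) (Fin n) ℂ) (k : Fin n) : ℝ :=
  if h : A.IsHermitian then (h.eigenvalues ∘ Tuple.sort h.eigenvalues) k.rev else 0

/-!
Let `λ₀ ≥ λ₁ ≥ …` be the eigenvalues of `R` and `γ₀ ≥ γ₁ ≥ …` those of `C = R - E Eᴴ`, so that
`‖C‖_F² = ∑ γₖ²`. Since `E Eᴴ` is positive semidefinite, `γₖ ≤ λₖ`; since it has rank at most `r`,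
`C` agrees with `R` on `ker Eᴴ`, of codimension at most `r`, and Courant–Fischer gives
`λₖ₊ᵣ ≤ γₖ`. Splitting `γₖ² = max(γₖ, 0)² + min(γₖ, 0)²`, the first inequality bounds the negative
parts from below by `∑ₖ min(λₖ, 0)²`, the second the positive parts by `∑_{k ≥ r} max(λₖ, 0)²`.
Equality holds for `E Eᴴ = ∑_{k < r} max(λₖ, 0) vₖ vₖᴴ`.
-/

open Finset Submodule Module RCLike
open scoped InnerProductSpace

section EigenbasisExpansion

variable {𝕜 E ι : Type*} [RCLike 𝕜] [NormedAddCommGroup E] [InnerProductSpace 𝕜 E] [Fintype ι]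
  {T : E →ₗ[𝕜] E} {b : OrthonormalBasis ι 𝕜 E} {μ : ι → ℝ}

namespace OrthonormalBasis

theorem inner_eq_zero_of_mem_span_image (b : OrthonormalBasis ι 𝕜 E) {s : Set ι} {j : ι}
    (hj : j ∉ s) {x : E} (hx : x ∈ span 𝕜 (b '' s)) : ⟪b j, x⟫_𝕜 = 0 := by
  have hle : span 𝕜 (b '' s) ≤ (𝕜 ∙ b j)ᗮ := span_le.mpr <| by
    rintro _ ⟨i, hi, rfl⟩
    exact mem_orthogonal_singleton_iff_inner_right.mpr
      (b.orthonormal.inner_eq_zero fun h => hj (h ▸ hi))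
  exact mem_orthogonal_singleton_iff_inner_right.mp (hle hx)

theorem finrank_span_image_finset (b : OrthonormalBasis ι 𝕜 E) (s : Finset ι) :
    finrank 𝕜 (span 𝕜 (b '' s)) = #s := by
  have := finrank_span_eq_card
    (b.orthonormal.linearIndependent.comp ((↑) : s → ι) Subtype.val_injective)
  rw [Function.comp_def, Fintype.card_coe] at this
  rw [Set.image_eq_range]
  exact this

end OrthonormalBasis

namespace LinearMap.IsSymmetric

theorem inner_eigenvector_apply (hT : T.IsSymmetric) (hb : ∀ k, T (b k) = (μ k : 𝕜) • b k)
    (k : ι) (x : E) : ⟪b k, T x⟫_𝕜 = μ k * ⟪b k, x⟫_𝕜 := by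
  rw [← hT, hb, inner_smul_left, conj_ofReal]

theorem re_inner_apply_self_eq_sum (hT : T.IsSymmetric) (hb : ∀ k, T (b k) = (μ k : 𝕜) • b k)
    (x : E) : re ⟪x, T x⟫_𝕜 = ∑ k, μ k * ‖⟪b k, x⟫_𝕜‖ ^ 2 := by
  rw [← b.sum_inner_mul_inner x (T x), map_sum]
  refine sum_congr rfl fun k _ => ?_
  rw [hT.inner_eigenvector_apply hb, mul_left_comm, re_ofReal_mul, ← inner_conj_symm x,
    RCLike.conj_mul, ← ofReal_pow, ofReal_re]

theorem mul_norm_sq_le_re_inner_of_mem_span (hT : T.IsSymmetric)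
    (hb : ∀ k, T (b k) = (μ k : 𝕜) • b k) {s : Set ι} {c : ℝ} (hc : ∀ k ∈ s, c ≤ μ k) {x : E}
    (hx : x ∈ span 𝕜 (b '' s)) : c * ‖x‖ ^ 2 ≤ re ⟪x, T x⟫_𝕜 := by
  rw [hT.re_inner_apply_self_eq_sum hb, ← b.sum_sq_norm_inner_right, mul_sum]
  refine sum_le_sum fun k _ => ?_
  by_cases hk : k ∈ s
  · exact mul_le_mul_of_nonneg_right (hc k hk) (by positivity)
  · simp [b.inner_eq_zero_of_mem_span_image hk hx]

theorem re_inner_le_mul_norm_sq_of_mem_span (hT : T.IsSymmetric)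
    (hb : ∀ k, T (b k) = (μ k : 𝕜) • b k) {s : Set ι} {c : ℝ} (hc : ∀ k ∈ s, μ k ≤ c) {x : E}
    (hx : x ∈ span 𝕜 (b '' s)) : re ⟪x, T x⟫_𝕜 ≤ c * ‖x‖ ^ 2 := by
  rw [hT.re_inner_apply_self_eq_sum hb, ← b.sum_sq_norm_inner_right, mul_sum]
  refine sum_le_sum fun k _ => ?_
  by_cases hk : k ∈ s
  · exact mul_le_mul_of_nonneg_right (hc k hk) (by positivity)
  · simp [b.inner_eq_zero_of_mem_span_image hk hx]

theorem sum_norm_sq_apply_eq_sum_sq (hT : T.IsSymmetric) (hb : ∀ k, T (b k) = (μ k : 𝕜) • b k)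
    {ι' : Type*} [Fintype ι'] (e : OrthonormalBasis ι' 𝕜 E) :
    ∑ j, ‖T (e j)‖ ^ 2 = ∑ k, μ k ^ 2 := calc
  ∑ j, ‖T (e j)‖ ^ 2 = ∑ k, μ k ^ 2 * ∑ j, ‖⟪e j, b k⟫_𝕜‖ ^ 2 := by
    simp_rw [← b.sum_sq_norm_inner_right (T _), hT.inner_eigenvector_apply hb, mul_sum]
    rw [sum_comm]
    refine sum_congr rfl fun k _ => sum_congr rfl fun j _ => ?_
    rw [norm_mul, norm_ofReal, mul_pow, sq_abs, ← inner_conj_symm, norm_conj]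
  _ = ∑ k, μ k ^ 2 := by simp [e.sum_sq_norm_inner_right, b.norm_eq_one]

end LinearMap.IsSymmetric

end EigenbasisExpansion

section CourantFischer

variable {𝕜 E : Type*} [RCLike 𝕜] [NormedAddCommGroup E] [InnerProductSpace 𝕜 E] {n : ℕ}
  {T : E →ₗ[𝕜] E} {b : OrthonormalBasis (Fin n) 𝕜 E} {μ : Fin n → ℝ}

namespace LinearMap.IsSymmetric

theorem le_eigenvalue_of_finrank_lt (hT : T.IsSymmetric)
    (hb : ∀ k, T (b k) = (μ k : 𝕜) • b k) (hμ : Antitone μ) {k : Fin n} {S : Submodule 𝕜 E}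
    (hS : (k : ℕ) < finrank 𝕜 S) {c : ℝ} (hc : ∀ x ∈ S, c * ‖x‖ ^ 2 ≤ re ⟪x, T x⟫_𝕜) :
    c ≤ μ k := by
  have : FiniteDimensional 𝕜 E := b.toBasis.finiteDimensional_of_finite
  -- `S` meets the span of the eigenvectors `b k, b (k+1), …`, where the form is at most `μ k`.
  set B := span 𝕜 (b '' (Finset.Ici k : Finset (Fin n)))
  have hB : finrank 𝕜 B = n - k := by rw [b.finrank_span_image_finset, Fin.card_Ici]
  have hE : finrank 𝕜 E = n := by simp [finrank_eq_card_basis b.toBasis]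
  have hdim := Submodule.finrank_sup_add_finrank_inf_eq S B
  have hsup := (S ⊔ B).finrank_le
  obtain ⟨x, ⟨hxS, hxB⟩, hx0⟩ := Submodule.exists_mem_ne_zero_of_ne_bot <|
    Submodule.one_le_finrank_iff.mp (by omega : 1 ≤ finrank 𝕜 ↥(S ⊓ B))
  have hupper := hT.re_inner_le_mul_norm_sq_of_mem_span hb
    (fun j hj => hμ (Finset.mem_Ici.mp hj)) hxB
  exact le_of_mul_le_mul_right ((hc x hxS).trans hupper) (by positivity)

theorem eigenvalue_le_eigenvalue_of_re_inner_le {T' : E →ₗ[𝕜] E}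
    {b' : OrthonormalBasis (Fin n) 𝕜 E} {μ' : Fin n → ℝ} (hT : T.IsSymmetric)
    (hT' : T'.IsSymmetric) (hb : ∀ k, T (b k) = (μ k : 𝕜) • b k)
    (hb' : ∀ k, T' (b' k) = (μ' k : 𝕜) • b' k) (hμ : Antitone μ) (hμ' : Antitone μ')
    {K : Submodule 𝕜 E} {r : ℕ} (hK : n ≤ finrank 𝕜 K + r)
    (hTK : ∀ x ∈ K, re ⟪x, T x⟫_𝕜 ≤ re ⟪x, T' x⟫_𝕜) {j k : Fin n} (hjk : (j : ℕ) + r ≤ k) :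
    μ k ≤ μ' j := by
  have : FiniteDimensional 𝕜 E := b.toBasis.finiteDimensional_of_finite
  set B := span 𝕜 (b '' (Finset.Iic k : Finset (Fin n)))
  have hB : finrank 𝕜 B = k + 1 := by rw [b.finrank_span_image_finset, Fin.card_Iic]
  have hE : finrank 𝕜 E = n := by simp [finrank_eq_card_basis b.toBasis]
  have hdim := Submodule.finrank_sup_add_finrank_inf_eq K B
  have hsup := (K ⊔ B).finrank_le
  refine hT'.le_eigenvalue_of_finrank_lt hb' hμ' (S := K ⊓ B) (by omega)
    fun x ⟨hxK, hxB⟩ => ?_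
  exact (hT.mul_norm_sq_le_re_inner_of_mem_span hb (fun i hi => hμ (Finset.mem_Iic.mp hi))
    hxB).trans (hTK x hxK)

end LinearMap.IsSymmetric

end CourantFischer

section HermitianMatrix

variable {𝕜 n m : Type*} [RCLike 𝕜] [Fintype n] [DecidableEq n] [Fintype m] [DecidableEq m]

theorem Matrix.IsHermitian.sum_sq_norm_apply_eq_sum_sq {C : Matrix n n 𝕜} (hC : C.IsHermitian)
    {ι : Type*} [Fintype ι] {b : OrthonormalBasis ι 𝕜 (EuclideanSpace 𝕜 n)} {μ : ι → ℝ}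
    (hb : ∀ k, toEuclideanLin C (b k) = (μ k : 𝕜) • b k) :
    ∑ i, ∑ j, ‖C i j‖ ^ 2 = ∑ k, μ k ^ 2 := by
  rw [← (isSymmetric_toEuclideanLin_iff.mpr hC).sum_norm_sq_apply_eq_sum_sq hb
    (EuclideanSpace.basisFun n 𝕜), sum_comm]
  refine sum_congr rfl fun j _ => ?_
  simp [EuclideanSpace.norm_sq_eq, toLpLin_apply]

theorem Matrix.re_inner_toEuclideanLin_sub_mul_conjTranspose (R : Matrix n n 𝕜)
    (E : Matrix n m 𝕜) (x : EuclideanSpace 𝕜 n) :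
    re ⟪x, toEuclideanLin (R - E * Eᴴ) x⟫_𝕜 =
      re ⟪x, toEuclideanLin R x⟫_𝕜 - ‖toEuclideanLin Eᴴ x‖ ^ 2 := by
  have hpos : ⟪x, toEuclideanLin E (toEuclideanLin Eᴴ x)⟫_𝕜 =
      ⟪toEuclideanLin Eᴴ x, toEuclideanLin Eᴴ x⟫_𝕜 := by
    rw [toEuclideanLin_conjTranspose_eq_adjoint, LinearMap.adjoint_inner_left]
  rw [map_sub, LinearMap.sub_apply, inner_sub_right, map_sub, toLpLin_mul _ 2,
    LinearMap.comp_apply, hpos, inner_self_eq_norm_sq]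

theorem OrthonormalBasis.toMatrix_mul_diagonal_mul_conjTranspose_mulVec
    (b : OrthonormalBasis n 𝕜 (EuclideanSpace 𝕜 n)) (d : n → 𝕜) (k : n) :
    ((EuclideanSpace.basisFun n 𝕜).toBasis.toMatrix b * diagonal d *
      ((EuclideanSpace.basisFun n 𝕜).toBasis.toMatrix b)ᴴ) *ᵥ b k = d k • b k := by
  set V := (EuclideanSpace.basisFun n 𝕜).toBasis.toMatrix b
  have hV : V *ᵥ Pi.single k 1 = b k := by
    ext i
    simp [V, Basis.toMatrix_apply]
  have hVV : Vᴴ * V = 1 :=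
    mem_unitaryGroup_iff'.mp
      ((EuclideanSpace.basisFun n 𝕜).toMatrix_orthonormalBasis_mem_unitary b)
  rw [← hV, ← mulVec_mulVec, mulVec_mulVec _ Vᴴ V, hVV, one_mulVec, ← mulVec_mulVec,
    diagonal_mulVec_single, ← mulVec_smul, ← smul_eq_mul, Pi.single_smul]

end HermitianMatrix

section DescendingEigenbasis

variable {M : ℕ} {A : Matrix (Fin M) (Fin M) ℂ}

theorem eigDesc_of_isHermitian (hA : A.IsHermitian) (k : Fin M) :
    eigDesc A k = hA.eigenvalues (Tuple.sort hA.eigenvalues k.rev) := by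
  simp [eigDesc, hA]

theorem antitone_eigDesc (hA : A.IsHermitian) : Antitone (eigDesc A) := fun k l hkl => by
  simp only [eigDesc_of_isHermitian hA]
  exact Tuple.monotone_sort hA.eigenvalues (Fin.rev_le_rev.mpr hkl)

noncomputable def Matrix.IsHermitian.eigenbasisDesc (hA : A.IsHermitian) :
    OrthonormalBasis (Fin M) ℂ (EuclideanSpace ℂ (Fin M)) :=
  hA.eigenvectorBasis.reindex (Fin.revPerm.trans (Tuple.sort hA.eigenvalues)).symm

theorem Matrix.IsHermitian.toEuclideanLin_eigenbasisDesc (hA : A.IsHermitian) (k : Fin M) :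
    toEuclideanLin A (hA.eigenbasisDesc k) = (eigDesc A k : ℂ) • hA.eigenbasisDesc k := by
  ext1
  simp [eigenbasisDesc, toLpLin_apply, mulVec_eigenvectorBasis, eigDesc_of_isHermitian hA]

theorem Matrix.IsHermitian.sum_sq_norm_apply_eq_sum_sq_eigDesc (hA : A.IsHermitian) :
    ∑ i, ∑ j, ‖A i j‖ ^ 2 = ∑ k, eigDesc A k ^ 2 :=
  hA.sum_sq_norm_apply_eq_sum_sq hA.toEuclideanLin_eigenbasisDesc

end DescendingEigenbasis

theorem sum_ite_sq_le_sum_sq {n r : ℕ} {d μ : Fin n → ℝ} (hle : ∀ k, μ k ≤ d k)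
    (hge : ∀ j k : Fin n, (j : ℕ) + r ≤ k → d k ≤ μ j) :
    ∑ k : Fin n, (if r ≤ (k : ℕ) then d k ^ 2 else min (d k) 0 ^ 2) ≤ ∑ k, μ k ^ 2 := by
  have hsplit (x : ℝ) : x ^ 2 = max x 0 ^ 2 + min x 0 ^ 2 := by
    rcases le_total x 0 with h | h <;> simp [h]
  -- Positive parts are compared along the shift `k ↦ k - r`, negative parts pointwise.
  set S := univ.filter fun k : Fin n => r ≤ (k : ℕ)
  let shift (k : Fin n) : Fin n := ⟨k - r, by omega⟩
  have hpos : ∑ k ∈ S, max (d k) 0 ^ 2 ≤ ∑ j, max (μ j) 0 ^ 2 := calc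
    ∑ k ∈ S, max (d k) 0 ^ 2 ≤ ∑ k ∈ S, max (μ (shift k)) 0 ^ 2 := by
      refine sum_le_sum fun k hk => pow_le_pow_left₀ (le_max_right _ _)
        (max_le_max_right 0 (hge _ _ ?_)) 2
      simp [shift, (mem_filter.mp hk).2]
    _ = ∑ j ∈ S.image shift, max (μ j) 0 ^ 2 := by
      refine (sum_image (f := fun j => max (μ j) 0 ^ 2)
        fun k hk k' hk' h => Fin.ext ?_).symm
      have := congrArg Fin.val h
      simp only [S, shift, coe_filter, Set.mem_ofPred_eq, mem_univ, true_and] at hk hk' this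
      omega
    _ ≤ ∑ j, max (μ j) 0 ^ 2 :=
      sum_le_sum_of_subset_of_nonneg (subset_univ _) fun _ _ _ => sq_nonneg _
  have hneg : ∑ k, min (d k) 0 ^ 2 ≤ ∑ k, min (μ k) 0 ^ 2 := by
    refine sum_le_sum fun k _ => ?_
    nlinarith [min_le_min_right 0 (hle k), min_le_right (d k) 0]
  calc ∑ k : Fin n, (if r ≤ (k : ℕ) then d k ^ 2 else min (d k) 0 ^ 2)
      = ∑ k ∈ S, max (d k) 0 ^ 2 + ∑ k, min (d k) 0 ^ 2 := by
        rw [sum_filter, ← sum_add_distrib]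
        refine sum_congr rfl fun k _ => ?_
        split_ifs
        · exact hsplit _
        · ring
    _ ≤ ∑ k, max (μ k) 0 ^ 2 + ∑ k, min (μ k) 0 ^ 2 := add_le_add hpos hneg
    _ = ∑ k, μ k ^ 2 := by rw [← sum_add_distrib]; simp only [← hsplit]

theorem sum_ite_sq_eq_sum_filter_add_sum_filter {n r : ℕ} (d : Fin n → ℝ) :
    ∑ k : Fin n, (if r ≤ (k : ℕ) then d k ^ 2 else min (d k) 0 ^ 2) =
      ∑ k ∈ univ.filter (fun k : Fin n => r ≤ (k : ℕ)), d k ^ 2 +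
        ∑ k ∈ univ.filter (fun k : Fin n => (k : ℕ) < r ∧ d k < 0), d k ^ 2 := by
  rw [sum_filter, sum_filter, ← sum_add_distrib]
  refine sum_congr rfl fun k _ => ?_
  by_cases hk : r ≤ (k : ℕ)
  · simp [hk]
  · rcases lt_or_ge (d k) 0 with h | h
    · simp [hk, h, h.le, not_le.mp hk]
    · simp [hk, h, not_lt.mpr h]

section LowRankApproximation

variable {M : ℕ} {R : Matrix (Fin M) (Fin M) ℂ}

theorem eigDesc_sub_mul_conjTranspose_le {T : ℕ} (hR : R.IsHermitian)
    (E : Matrix (Fin M) (Fin T) ℂ) (k : Fin M) : eigDesc (R - E * Eᴴ) k ≤ eigDesc R k := by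
  have hC := hR.sub (isHermitian_mul_conjTranspose_self E)
  refine (isSymmetric_toEuclideanLin_iff.mpr hC).eigenvalue_le_eigenvalue_of_re_inner_le
    (isSymmetric_toEuclideanLin_iff.mpr hR) hC.toEuclideanLin_eigenbasisDesc
    hR.toEuclideanLin_eigenbasisDesc (antitone_eigDesc hC) (antitone_eigDesc hR)
    (K := ⊤) (r := 0) (by simp) (fun x _ => ?_) le_rfl
  rw [re_inner_toEuclideanLin_sub_mul_conjTranspose]
  linarith [sq_nonneg ‖toEuclideanLin Eᴴ x‖]

theorem eigDesc_le_eigDesc_sub_mul_conjTranspose {T r : ℕ} (hR : R.IsHermitian)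
    {E : Matrix (Fin M) (Fin T) ℂ} (hE : E.rank ≤ r) {j k : Fin M} (hjk : (j : ℕ) + r ≤ k) :
    eigDesc R k ≤ eigDesc (R - E * Eᴴ) j := by
  have hC := hR.sub (isHermitian_mul_conjTranspose_self E)
  have hker := LinearMap.finrank_range_add_finrank_ker (toEuclideanLin Eᴴ)
  have hrange : finrank ℂ (LinearMap.range (toEuclideanLin Eᴴ)) = E.rank := by
    rw [toEuclideanLin_eq_toLin_orthonormal, ← rank_eq_finrank_range_toLin, rank_conjTranspose]
  rw [hrange, finrank_euclideanSpace_fin] at hker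
  refine (isSymmetric_toEuclideanLin_iff.mpr hR).eigenvalue_le_eigenvalue_of_re_inner_le
    (isSymmetric_toEuclideanLin_iff.mpr hC) hR.toEuclideanLin_eigenbasisDesc
    hC.toEuclideanLin_eigenbasisDesc (antitone_eigDesc hR) (antitone_eigDesc hC)
    (K := LinearMap.ker (toEuclideanLin Eᴴ)) (by omega) (fun x hx => ?_) hjk
  rw [re_inner_toEuclideanLin_sub_mul_conjTranspose, LinearMap.mem_ker.mp hx, norm_zero]
  simp

theorem exists_rank_le_sum_sq_sub_mul_conjTranspose_eq (hR : R.IsHermitian) (r : ℕ) :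
    ∃ E : Matrix (Fin M) (Fin M) ℂ, E.rank ≤ r ∧
      ∑ i, ∑ j, ‖(R - E * Eᴴ) i j‖ ^ 2 =
        ∑ k : Fin M, if r ≤ (k : ℕ) then eigDesc R k ^ 2 else min (eigDesc R k) 0 ^ 2 := by
  set b := hR.eigenbasisDesc
  set V := (EuclideanSpace.basisFun (Fin M) ℂ).toBasis.toMatrix b
  -- `√` of a negative number is `0`, so `s k ^ 2 = max (eigDesc R k) 0` for `k < r`.
  set s : Fin M → ℝ := fun k => if (k : ℕ) < r then √(eigDesc R k) else 0
  set E := V * diagonal fun k => (s k : ℂ)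
  have hEE : E * Eᴴ = V * diagonal (fun k => ((s k ^ 2 : ℝ) : ℂ)) * Vᴴ := by
    rw [conjTranspose_mul, diagonal_conjTranspose, Matrix.mul_assoc,
      ← Matrix.mul_assoc (diagonal _), diagonal_mul_diagonal, ← Matrix.mul_assoc]
    congr
    ext1 k
    simp [sq]
  have hC (k : Fin M) : toEuclideanLin (R - E * Eᴴ) (b k) =
      ((eigDesc R k - s k ^ 2 : ℝ) : ℂ) • b k := by
    rw [map_sub, LinearMap.sub_apply, hR.toEuclideanLin_eigenbasisDesc, toLpLin_apply, hEE,
      b.toMatrix_mul_diagonal_mul_conjTranspose_mulVec, Complex.ofReal_sub, sub_smul]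
    rfl
  refine ⟨E, ?_, ?_⟩
  · have hsupp (k : {k // (s k : ℂ) ≠ 0}) : (k.1 : ℕ) < r := by
      by_contra h
      exact k.2 (by simp [s, h])
    calc E.rank ≤ (diagonal fun k => (s k : ℂ)).rank := rank_mul_le_right _ _
      _ = Fintype.card {k // (s k : ℂ) ≠ 0} := rank_diagonal _
      _ ≤ Fintype.card (Fin r) := Fintype.card_le_of_injective (fun k => ⟨k.1, hsupp k⟩)
          fun k l h => Subtype.ext (Fin.ext (Fin.mk.inj_iff.mp h))
      _ = r := Fintype.card_fin r
  · rw [(hR.sub (isHermitian_mul_conjTranspose_self E)).sum_sq_norm_apply_eq_sum_sq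
      (μ := fun k => eigDesc R k - s k ^ 2) hC]
    refine sum_congr rfl fun k _ => ?_
    by_cases hk : r ≤ (k : ℕ)
    · simp [s, hk, show ¬ (k : ℕ) < r by omega]
    · simp only [s, hk, if_false, show (k : ℕ) < r by omega, if_true, Real.sq_sqrt']
      rcases le_total (eigDesc R k) 0 with h | h <;> simp [h]

theorem isLeast_sum_sq_sub_mul_conjTranspose (hR : R.IsHermitian) (r : ℕ) :
    IsLeast {x : ℝ | ∃ (T : ℕ) (E : Matrix (Fin M) (Fin T) ℂ), E.rank ≤ r ∧
        x = ∑ i, ∑ j, ‖(R - E * Eᴴ) i j‖ ^ 2}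
      (∑ k : Fin M, if r ≤ (k : ℕ) then eigDesc R k ^ 2 else min (eigDesc R k) 0 ^ 2) := by
  refine ⟨?_, ?_⟩
  · obtain ⟨E, hE, hval⟩ := exists_rank_le_sum_sq_sub_mul_conjTranspose_eq hR r
    exact ⟨M, E, hE, hval.symm⟩
  · rintro _ ⟨T, E, hE, rfl⟩
    rw [(hR.sub (isHermitian_mul_conjTranspose_self E)).sum_sq_norm_apply_eq_sum_sq_eigDesc]
    exact sum_ite_sq_le_sum_sq (eigDesc_sub_mul_conjTranspose_le hR E)
      fun j k hjk => eigDesc_le_eigDesc_sub_mul_conjTranspose hR hE hjk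

end LowRankApproximation

theorem stmt10_general {M N : ℕ} (R : Matrix (Fin M) (Fin M) ℂ)
    (hR : R.IsHermitian) :
    IsLeast
      {x : ℝ | ∃ (T : ℕ) (E : Matrix (Fin M) (Fin T) ℂ), E.rank ≤ N - 1 ∧
        x = ∑ i, ∑ j, ‖(R - E * Eᴴ) i j‖ ^ 2}
      ((∑ k ∈ Finset.univ.filter (fun k : Fin M => N - 1 ≤ (k : ℕ)),
          (eigDesc R k) ^ 2) +
        ∑ k ∈ Finset.univ.filter
            (fun k : Fin M => (k : ℕ) < N - 1 ∧ eigDesc R k < 0),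
          (eigDesc R k) ^ 2) ∧
    ((∀ k : Fin M, (k : ℕ) < N - 1 → 0 ≤ eigDesc R k) →
      IsLeast
        {x : ℝ | ∃ (T : ℕ) (E : Matrix (Fin M) (Fin T) ℂ), E.rank ≤ N - 1 ∧
          x = ∑ i, ∑ j, ‖(R - E * Eᴴ) i j‖ ^ 2}
        (∑ k ∈ Finset.univ.filter (fun k : Fin M => N - 1 ≤ (k : ℕ)),
          (eigDesc R k) ^ 2)) := by
  have hmin := isLeast_sum_sq_sub_mul_conjTranspose hR (N - 1)
  rw [sum_ite_sq_eq_sum_filter_add_sum_filter] at hmin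
  refine ⟨hmin, fun hnn => ?_⟩
  have hempty : univ.filter (fun k : Fin M => (k : ℕ) < N - 1 ∧ eigDesc R k < 0) = ∅ :=
    filter_eq_empty_iff.mpr fun k _ ⟨hk, hneg⟩ => (hnn k hk).not_gt hneg
  rwa [hempty, sum_empty, add_zero] at hmin

theorem stmt10 {M N : ℕ} (hN : N - 1 < M) (R : Matrix (Fin M) (Fin M) ℂ)
    (hR : R.IsHermitian) :
    IsLeast
      {x : ℝ | ∃ (T : ℕ) (E : Matrix (Fin M) (Fin T) ℂ), E.rank ≤ N - 1 ∧
        x = ∑ i, ∑ j, ‖(R - E * Eᴴ) i j‖ ^ 2}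
      ((∑ k ∈ Finset.univ.filter (fun k : Fin M => N - 1 ≤ (k : ℕ)),
          (eigDesc R k) ^ 2) +
        ∑ k ∈ Finset.univ.filter
            (fun k : Fin M => (k : ℕ) < N - 1 ∧ eigDesc R k < 0),
          (eigDesc R k) ^ 2) ∧
    ((∀ k : Fin M, (k : ℕ) < N - 1 → 0 ≤ eigDesc R k) →
      IsLeast
        {x : ℝ | ∃ (T : ℕ) (E : Matrix (Fin M) (Fin T) ℂ), E.rank ≤ N - 1 ∧
          x = ∑ i, ∑ j, ‖(R - E * Eᴴ) i j‖ ^ 2}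
        (∑ k ∈ Finset.univ.filter (fun k : Fin M => N - 1 ≤ (k : ℕ)),
          (eigDesc R k) ^ 2)) :=
  stmt10_general R hR
end

section
/- Let U_s ∈ C^{M×N} have orthonormal columns (M > N) and let a ∈ C^M be nonzero. Then the N-th largest eigenvalue of P_a^⊥ U_s U_s^H satisfies λ_N(P_a^⊥ U_s U_s^H) = a^H (I_M - U_s U_s^H) a / (a^H a). -/
/-!
With `Y = P_a^⊥ U_s`, the matrix `P_a^⊥ U_s U_sᴴ P_a^⊥ = Y Yᴴ` is positive semidefinite and has the
spectrum of `Yᴴ Y = I_N - w wᴴ / ‖a‖²`, `w = U_sᴴ a`, padded with `M - N` zeros. That rank-one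
perturbation of the identity has eigenvalues `1` (`N - 1` times) and `τ = 1 - ‖w‖² / ‖a‖²`, so the
characteristic polynomial is `X^(M-N) (X - 1)^(N-1) (X - τ)`. Being an eigenvalue of a positive
semidefinite matrix, `τ ≥ 0`, and clearly `τ ≤ 1`; hence in decreasing order the eigenvalues are
`1, …, 1, τ, 0, …, 0`, the `N`-th one is `τ`, and `τ` is the MUSIC null-spectrum.
-/

open Matrix ComplexOrder

/-- Orthogonal projector onto the orthogonal complement of `span {a}`. -/
noncomputable def projPerp {M : ℕ} (a : Fin M → ℂ) : Matrix (Fin M) (Fin M) ℂ :=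
  1 - (star a ⬝ᵥ a)⁻¹ • Matrix.vecMulVec a (star a)

open Finset Polynomial

theorem Multiset.countP_replicate {α : Type*} (p : α → Prop) [DecidablePred p] (n : ℕ) (a : α) :
    (replicate n a).countP p = if p a then n else 0 := by
  rw [← coe_replicate, coe_countP, List.countP_replicate]
  simp

theorem Monotone.eq_of_card_lt_le {α : Type*} [LinearOrder α] {n : ℕ} {g : Fin n → α}
    (hg : Monotone g) {k : Fin n} {t : α}
    (hlt : #{i | g i < t} ≤ k) (hgt : #{i | t < g i} ≤ n - 1 - k) : g k = t := by
  refine le_antisymm (not_lt.1 fun htk => ?_) (not_lt.1 fun hkt => ?_)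
  · have := card_le_card fun i (hi : i ∈ Ici k) =>
      mem_filter.2 ⟨mem_univ i, htk.trans_le (hg (mem_Ici.1 hi))⟩
    rw [Fin.card_Ici] at this
    omega
  · have := card_le_card fun i (hi : i ∈ Iic k) =>
      mem_filter.2 ⟨mem_univ i, (hg (mem_Iic.1 hi)).trans_lt hkt⟩
    rw [Fin.card_Iic] at this
    omega

theorem eigDesc_eq_of_countP_le {n : ℕ} {A : Matrix (Fin n) (Fin n) ℂ} (hA : A.IsHermitian)
    {k : Fin n} {t : ℝ}
    (hgt : (univ.val.map hA.eigenvalues).countP (t < ·) ≤ k)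
    (hlt : (univ.val.map hA.eigenvalues).countP (· < t) ≤ n - 1 - k) :
    eigDesc A k = t := by
  set f := hA.eigenvalues
  have hperm : univ.val.map (f ∘ Tuple.sort f) = univ.val.map f := by
    rw [← Multiset.map_map, Multiset.map_univ_val_equiv]
  rw [← hperm, Multiset.countP_map] at hgt hlt
  rw [eigDesc, dif_pos hA]
  refine (Tuple.monotone_sort f).eq_of_card_lt_le ?_ ?_
  · rw [Fin.val_rev]
    exact hlt.trans_eq (by omega)
  · rw [Fin.val_rev]
    exact hgt.trans_eq (by omega)

theorem eigDesc_eq_of_map_eigenvalues_eq {M N : ℕ} (hMN : N < M) (hN : 1 ≤ N)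
    {A : Matrix (Fin M) (Fin M) ℂ} (hA : A.IsHermitian) {t : ℝ} (ht0 : 0 ≤ t) (ht1 : t ≤ 1)
    (h : univ.val.map hA.eigenvalues =
      t ::ₘ (Multiset.replicate (M - N) 0 + Multiset.replicate (N - 1) 1)) :
    eigDesc A ⟨N - 1, by omega⟩ = t := by
  refine eigDesc_eq_of_countP_le hA ?_ ?_
  · simp [h, Multiset.countP_replicate, ht0.not_gt]
    split_ifs <;> omega
  · simp [h, Multiset.countP_replicate, ht1.not_gt]
    split_ifs <;> omega

section Hermitian

variable {𝕜 n : Type*} [RCLike 𝕜] [Fintype n] [DecidableEq n] {A : Matrix n n 𝕜}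

theorem Matrix.IsHermitian.exists_eigenvalues_eq_of_isRoot (hA : A.IsHermitian) {τ : 𝕜}
    (h : A.charpoly.IsRoot τ) : ∃ i, (hA.eigenvalues i : 𝕜) = τ := by
  rw [hA.charpoly_eq, IsRoot, eval_prod, prod_eq_zero_iff] at h
  obtain ⟨i, -, hi⟩ := h
  exact ⟨i, (sub_eq_zero.1 (by simpa using hi)).symm⟩

theorem Matrix.IsHermitian.map_eigenvalues_eq_of_charpoly_eq (hA : A.IsHermitian)
    {s : Multiset ℝ} (h : A.charpoly = (s.map fun x : ℝ => X - C (x : 𝕜)).prod) :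
    univ.val.map hA.eigenvalues = s := by
  have hroots := hA.roots_charpoly_eq_eigenvalues
  have hs : (s.map fun x : ℝ => X - C (x : 𝕜)) = (s.map RCLike.ofReal).map (X - C ·) := by
    rw [Multiset.map_map]
    rfl
  rw [h, hs, roots_multiset_prod_X_sub_C, ← Multiset.map_map] at hroots
  exact Multiset.map_injective RCLike.ofReal_injective hroots.symm

end Hermitian

theorem Matrix.charpoly_one_sub_vecMulVec {R n : Type*} [CommRing R] [Fintype n] [DecidableEq n]
    [Nonempty n] (u v : n → R) :
    (1 - vecMulVec u v).charpoly = (X - 1) ^ (Fintype.card n - 1) * (X - C (1 - u ⬝ᵥ v)) := by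
  have h : 1 - vecMulVec u v = vecMulVec (-u) v - scalar n (-1 : R) := by
    rw [neg_vecMulVec, map_neg, scalar_apply, diagonal_one]
    abel
  have hn : Fintype.card n = Fintype.card n - 1 + 1 := (Nat.sub_add_cancel Fintype.card_pos).symm
  rw [h, charpoly_sub_scalar, charpoly_vecMulVec, hn, Nat.add_sub_cancel]
  simp only [neg_dotProduct, smul_eq_C_mul, map_neg, neg_mul, neg_comp, mul_comp, C_comp, sub_comp,
    pow_comp, X_comp, map_sub, map_one]
  ring

theorem dotProduct_one_sub_mulVec_div {𝕜 m n : Type*} [RCLike 𝕜] [Fintype m] [Fintype n]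
    [DecidableEq m] (B : Matrix m n 𝕜) {a : m → 𝕜} (ha : a ≠ 0) :
    star a ⬝ᵥ ((1 - B * Bᴴ) *ᵥ a) / (star a ⬝ᵥ a) =
      1 - star (Bᴴ *ᵥ a) ⬝ᵥ (Bᴴ *ᵥ a) / (star a ⬝ᵥ a) := by
  have hα : star a ⬝ᵥ a ≠ 0 := dotProduct_star_self_eq_zero.not.2 ha
  rw [sub_mulVec, one_mulVec, dotProduct_sub, ← mulVec_mulVec, dotProduct_mulVec, star_mulVec,
    conjTranspose_conjTranspose, sub_div, div_self hα]

section projPerp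

variable {M N : ℕ} (a : Fin M → ℂ)

theorem projPerp_isHermitian : (projPerp a).IsHermitian := by
  rw [IsHermitian, projPerp, conjTranspose_sub, conjTranspose_one, conjTranspose_smul,
    conjTranspose_vecMulVec, star_star, star_inv₀, ← star_dotProduct]

theorem projPerp_mul_self : projPerp a * projPerp a = projPerp a := by
  have hc : (star a ⬝ᵥ a)⁻¹ * (star a ⬝ᵥ a)⁻¹ * (star a ⬝ᵥ a) = (star a ⬝ᵥ a)⁻¹ := by
    simpa using mul_self_mul_inv (star a ⬝ᵥ a)⁻¹
  rw [projPerp, sub_mul, mul_sub, mul_sub, Matrix.one_mul, Matrix.mul_one, Matrix.one_mul,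
    smul_mul_smul, vecMulVec_mul_vecMulVec, vecMulVec_smul, smul_smul, hc]
  abel

theorem projPerp_mul_mul_projPerp (B : Matrix (Fin M) (Fin N) ℂ) :
    projPerp a * (B * Bᴴ) * projPerp a = projPerp a * B * (projPerp a * B)ᴴ := by
  rw [conjTranspose_mul, (projPerp_isHermitian a).eq]
  simp only [Matrix.mul_assoc]

theorem conjTranspose_mul_projPerp_mul (B : Matrix (Fin M) (Fin N) ℂ) :
    Bᴴ * projPerp a * B =
      Bᴴ * B - vecMulVec ((star a ⬝ᵥ a)⁻¹ • (Bᴴ *ᵥ a)) (star (Bᴴ *ᵥ a)) := by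
  rw [projPerp, Matrix.mul_sub, Matrix.sub_mul, Matrix.mul_one, Matrix.mul_smul, Matrix.smul_mul,
    mul_vecMulVec, vecMulVec_mul, star_mulVec, conjTranspose_conjTranspose, smul_vecMulVec]

theorem charpoly_projPerp_mul_mul_projPerp (hNM : N ≤ M) (hN : 1 ≤ N)
    {B : Matrix (Fin M) (Fin N) ℂ} (hB : Bᴴ * B = 1) :
    (projPerp a * (B * Bᴴ) * projPerp a).charpoly = X ^ (M - N) * ((X - 1) ^ (N - 1) *
      (X - C (1 - star (Bᴴ *ᵥ a) ⬝ᵥ (Bᴴ *ᵥ a) / (star a ⬝ᵥ a)))) := by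
  have : Nonempty (Fin N) := ⟨⟨0, hN⟩⟩
  have hgram : (projPerp a * B)ᴴ * (projPerp a * B) =
      1 - vecMulVec ((star a ⬝ᵥ a)⁻¹ • (Bᴴ *ᵥ a)) (star (Bᴴ *ᵥ a)) := by
    rw [conjTranspose_mul, (projPerp_isHermitian a).eq, Matrix.mul_assoc,
      ← Matrix.mul_assoc (projPerp a), projPerp_mul_self, ← Matrix.mul_assoc,
      conjTranspose_mul_projPerp_mul, hB]
  rw [projPerp_mul_mul_projPerp, charpoly_mul_comm_of_le _ _ (by simpa using hNM), hgram,
    charpoly_one_sub_vecMulVec, smul_dotProduct, dotProduct_comm (Bᴴ *ᵥ a), smul_eq_mul,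
    inv_mul_eq_div]
  simp only [Fintype.card_fin]

end projPerp

/-- The `N`-th largest eigenvalue of `P_a^⊥ U_s U_sᴴ` (computed through the Hermitian
matrix `P_a^⊥ U_s U_sᴴ P_a^⊥`, which has the same eigenvalues) equals the MUSIC
null-spectrum `aᴴ (I - U_s U_sᴴ) a / (aᴴ a)`. -/
theorem stmt13 {M N : ℕ} (hMN : N < M) (hN : 1 ≤ N)
    (Us : Matrix (Fin M) (Fin N) ℂ) (hUs : Usᴴ * Us = 1)
    (a : Fin M → ℂ) (ha : a ≠ 0) :
    (eigDesc (projPerp a * (Us * Usᴴ) * projPerp a)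
        ⟨N - 1, lt_trans (by omega) hMN⟩ : ℂ) =
      (star a ⬝ᵥ ((1 - Us * Usᴴ) *ᵥ a)) / (star a ⬝ᵥ a) := by
  rw [dotProduct_one_sub_mulVec_div Us ha]
  have hchar := charpoly_projPerp_mul_mul_projPerp a hMN.le hN hUs
  set τ : ℂ := 1 - star (Usᴴ *ᵥ a) ⬝ᵥ (Usᴴ *ᵥ a) / (star a ⬝ᵥ a)
  have hA : (projPerp a * (Us * Usᴴ) * projPerp a).PosSemidef := by
    rw [projPerp_mul_mul_projPerp]
    exact posSemidef_self_mul_conjTranspose _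
  obtain ⟨i, hi⟩ := hA.isHermitian.exists_eigenvalues_eq_of_isRoot (τ := τ) (by simp [hchar])
  set t := hA.isHermitian.eigenvalues i
  replace hi : (t : ℂ) = τ := hi
  have ht0 : 0 ≤ t := hA.eigenvalues_nonneg i
  have ht1 : t ≤ 1 := by
    have : (t : ℂ) ≤ 1 := by
      rw [hi]
      exact sub_le_self _ (div_nonneg (dotProduct_star_self_nonneg _)
        (dotProduct_star_self_nonneg _))
    exact_mod_cast this
  have hspec : univ.val.map hA.isHermitian.eigenvalues =
      t ::ₘ (Multiset.replicate (M - N) 0 + Multiset.replicate (N - 1) 1) :=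
    hA.isHermitian.map_eigenvalues_eq_of_charpoly_eq (by simp [hchar, hi]; ring)
  rw [← hi, eigDesc_eq_of_map_eigenvalues_eq hMN hN hA.isHermitian ht0 ht1 hspec]
end
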